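/- arXiv:math/0610483 — 2 statements merged into one kernel-verified Lean document; each statement's English description precedes it below -/
import Mathlib

section
/- Let F be a field of characteristic ≠ 2. Suppose A, B ∈ M₂(F) are invertible, A − 1 is invertible, AB ≠ BA, and A, B satisfy the fundamental equation. Then either (tr(A) = det(A) and tr(AB⁻¹) = 0), or det(a×b) = 0, where a and b are the traceless parts of A and B respectively. -/
open Matrix

/-! For 2×2 matrices `det X • X⁻¹ = adj X = tr X • 1 - X`. The fundamental equation says that
`(A⁻¹ - 1) B⁻¹ A` commutes with `B`; clearing denominators, so does `Z = (c - A) adj(B) A`, where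
`c = tr A - det A`. The 2×2 identity `A adj(B) A = tr(A adj B) A - det A • B` turns `[Z, B] = 0`
into `(s - c B) [A, B] = 0` with `s = c tr B - tr(A adj B)`. If `c = 0`, this forces
`tr(A adj B) = 0`, i.e. `tr(A B⁻¹) = 0`, because `[A, B] ≠ 0`. If `c ≠ 0` and `[A, B]` were
invertible, `B` would be scalar. Finally `a × b = [A, B] / 2`. -/

/-- The traceless part of a 2×2 matrix. -/
noncomputable def tracelessPart {F : Type*} [Field F] (A : Matrix (Fin 2) (Fin 2) F) :
    Matrix (Fin 2) (Fin 2) F :=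
  A - ((2 : F)⁻¹ * A.trace) • (1 : Matrix (Fin 2) (Fin 2) F)

/-- The cross product of traceless 2×2 matrices: `a×b = (ab - ba)/2`. -/
noncomputable def matCross {F : Type*} [Field F] (a b : Matrix (Fin 2) (Fin 2) F) :
    Matrix (Fin 2) (Fin 2) F :=
  (2 : F)⁻¹ • (a * b - b * a)

namespace Matrix

section CommRing

variable {R : Type*} [CommRing R]

theorem det_smul_nonsing_inv {n : Type*} [Fintype n] [DecidableEq n] {A : Matrix n n R}
    (h : IsUnit A.det) : A.det • A⁻¹ = adjugate A := by
  rw [inv_def, smul_smul, Ring.mul_inverse_cancel _ h, one_smul]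

theorem adjugate_fin_two_eq_trace_smul_sub (A : Matrix (Fin 2) (Fin 2) R) :
    adjugate A = trace A • 1 - A := by
  ext i j
  fin_cases i <;> fin_cases j <;> simp [adjugate_fin_two, trace_fin_two]

theorem mul_adjugate_mul_fin_two (X Y : Matrix (Fin 2) (Fin 2) R) :
    X * adjugate Y * X = trace (X * adjugate Y) • X - det X • Y := by
  ext i j
  fin_cases i <;> fin_cases j <;>
    simp [adjugate_fin_two, trace_fin_two, det_fin_two, mul_apply, Fin.sum_univ_two] <;> ring

theorem mul_commutator_eq_zero_of_commute {A B : Matrix (Fin 2) (Fin 2) R} (c : R)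
    (h : Commute ((c • 1 - A) * adjugate B * A) B) :
    ((c * trace B - trace (A * adjugate B)) • 1 - c • B) * (A * B - B * A) = 0 := by
  have hZ : (c • 1 - A) * adjugate B * A
      = (c * trace B - trace (A * adjugate B)) • A - c • (B * A) + det A • B := by
    rw [sub_mul, sub_mul, mul_adjugate_mul_fin_two, adjugate_fin_two_eq_trace_smul_sub]
    simp only [sub_mul, smul_mul_assoc, one_mul]
    module
  rw [Commute, SemiconjBy, hZ, ← sub_eq_zero] at h
  rw [← h]
  simp only [sub_mul, mul_sub, add_mul, mul_add, smul_mul_assoc, mul_smul_comm, one_mul, mul_assoc]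
  module

end CommRing

variable {F : Type*} [Field F]

theorem det_commutator_eq_zero_of_mul_commutator_eq_zero {A B : Matrix (Fin 2) (Fin 2) F}
    {s c : F} (hc : c ≠ 0) (h : (s • 1 - c • B) * (A * B - B * A) = 0) :
    det (A * B - B * A) = 0 := by
  by_contra hdet
  have hB : B = (c⁻¹ * s) • 1 := by
    rw [(isUnit_iff_isUnit_det _).mpr (isUnit_iff_ne_zero.mpr hdet) |>.mul_left_eq_zero,
      sub_eq_zero] at h
    rw [mul_smul, h, smul_smul, inv_mul_cancel₀ hc, one_smul]
  apply hdet
  simp [hB]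

end Matrix

theorem matCross_tracelessPart {F : Type*} [Field F] (A B : Matrix (Fin 2) (Fin 2) F) :
    matCross (tracelessPart A) (tracelessPart B) = (2 : F)⁻¹ • (A * B - B * A) := by
  unfold matCross tracelessPart
  congr 1
  simp only [sub_mul, mul_sub, smul_mul_assoc, mul_smul_comm, one_mul, mul_one]
  module

theorem commute_adjugate_mul_of_fundamental_eq {F : Type*} [Field F]
    {A B : Matrix (Fin 2) (Fin 2) F}
    (hA : IsUnit A) (hB : IsUnit B)
    (hfund : A⁻¹ * B⁻¹ * A * B - B⁻¹ * A * B = B * A⁻¹ * B⁻¹ * A - A) :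
    Commute (((A.trace - A.det) • 1 - A) * adjugate B * A) B := by
  have hdA := (isUnit_iff_isUnit_det A).mp hA
  have hdB := (isUnit_iff_isUnit_det B).mp hB
  have hW : Commute ((A⁻¹ - 1) * B⁻¹ * A) B := by
    have hBB : B * B⁻¹ = 1 := mul_nonsing_inv B hdB
    calc (A⁻¹ - 1) * B⁻¹ * A * B = A⁻¹ * B⁻¹ * A * B - B⁻¹ * A * B := by noncomm_ring
      _ = B * A⁻¹ * B⁻¹ * A - B * B⁻¹ * A := by rw [hfund, hBB, one_mul]
      _ = B * ((A⁻¹ - 1) * B⁻¹ * A) := by noncomm_ring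
  have hZ : ((A.trace - A.det) • 1 - A) * adjugate B * A
      = (A.det * B.det) • ((A⁻¹ - 1) * B⁻¹ * A) := by
    rw [← det_smul_nonsing_inv hdB, sub_smul, sub_right_comm,
      ← adjugate_fin_two_eq_trace_smul_sub, ← det_smul_nonsing_inv hdA]
    simp only [smul_sub, sub_mul, mul_smul_comm, smul_mul_assoc, smul_smul, one_mul, mul_comm]
  rw [hZ]
  exact hW.smul_left _

theorem stmt1_general {F : Type*} [Field F]
    (A B : Matrix (Fin 2) (Fin 2) F)
    (hA : IsUnit A) (hB : IsUnit B)
    (hnc : A * B ≠ B * A)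
    (hfund : A⁻¹ * B⁻¹ * A * B - B⁻¹ * A * B = B * A⁻¹ * B⁻¹ * A - A) :
    (A.trace = A.det ∧ (A * B⁻¹).trace = 0) ∨
      (matCross (tracelessPart A) (tracelessPart B)).det = 0 := by
  have hkey :=
    mul_commutator_eq_zero_of_commute _ (commute_adjugate_mul_of_fundamental_eq hA hB hfund)
  by_cases hc : A.trace - A.det = 0
  · have ht : trace (A * adjugate B) = 0 := by
      simpa [hc, sub_eq_zero, hnc] using hkey
    left
    refine ⟨sub_eq_zero.mp hc, ?_⟩
    rw [inv_def, mul_smul_comm, trace_smul, ht, smul_zero]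
  · right
    rw [matCross_tracelessPart, det_smul,
      det_commutator_eq_zero_of_mul_commutator_eq_zero hc hkey, mul_zero]

/-- For non-commuting invertible 2×2 matrix solutions `A, B` of the
fundamental equation (with `A - 1` invertible), either `tr A = det A` and
`tr (A B⁻¹) = 0`, or `det (a × b) = 0` where `a, b` are the traceless parts. -/
theorem stmt1 {F : Type*} [Field F] (h2 : (2 : F) ≠ 0)
    (A B : Matrix (Fin 2) (Fin 2) F)
    (hA : IsUnit A) (hB : IsUnit B) (hA1 : IsUnit (A - 1))
    (hnc : A * B ≠ B * A)
    (hfund : A⁻¹ * B⁻¹ * A * B - B⁻¹ * A * B = B * A⁻¹ * B⁻¹ * A - A) :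
    (A.trace = A.det ∧ (A * B⁻¹).trace = 0) ∨
      (matCross (tracelessPart A) (tracelessPart B)).det = 0 :=
  stmt1_general A B hA hB hnc hfund
end

section
/- Let F be a field of characteristic ≠ 2 in which every element has a square root. Then every traceless matrix a ∈ M₂(F) is group-conjugate to a matrix with zero diagonal: there exists an invertible C ∈ M₂(F) such that both diagonal entries of C⁻¹aC are 0. -/
open Matrix

/-!
If `a` is not scalar, some vector `v` is cyclic, and in the basis `v, a v` Cayley–Hamilton
(`a² = tr a • a - det a • 1`) makes `a` the companion matrix `!![0, -det a; 1, tr a]`, whose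
diagonal vanishes when `tr a = 0`. A traceless scalar matrix is `0`, since `2 ≠ 0`.
-/

namespace Matrix

variable {R K : Type*} [CommRing R] [Field K]

def krylov {n : ℕ} (a : Matrix (Fin n) (Fin n) R) (v : Fin n → R) : Matrix (Fin n) (Fin n) R :=
  of fun i j => (a ^ (j : ℕ) *ᵥ v) i

lemma mul_krylov_fin_two (a : Matrix (Fin 2) (Fin 2) R) (v : Fin 2 → R) :
    a * krylov a v = krylov a v * !![0, -a.det; 1, a.trace] := by
  ext i j
  fin_cases i <;> fin_cases j <;>
    simp [krylov, mul_apply, mulVec, dotProduct, Fin.sum_univ_two, det_fin_two, trace_fin_two] <;>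
    ring

lemma det_krylov_fin_two (a : Matrix (Fin 2) (Fin 2) R) (v : Fin 2 → R) :
    (krylov a v).det = a 1 0 * v 0 ^ 2 + (a 1 1 - a 0 0) * v 0 * v 1 - a 0 1 * v 1 ^ 2 := by
  simp [krylov, det_fin_two, mulVec, dotProduct, Fin.sum_univ_two]
  ring

lemma exists_det_krylov_ne_zero {a : Matrix (Fin 2) (Fin 2) K}
    (ha : a ∉ Set.range (scalar (Fin 2))) : ∃ v, (krylov a v).det ≠ 0 := by
  by_contra! h
  have h10 : a 1 0 = 0 := by simpa [det_krylov_fin_two] using h ![1, 0]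
  have h01 : a 0 1 = 0 := by simpa [det_krylov_fin_two] using h ![0, 1]
  have h11 : a 1 1 = a 0 0 := by
    have := h ![1, 1]
    simp [det_krylov_fin_two, h10, h01] at this
    linear_combination this
  exact ha ⟨a 0 0, by ext i j; fin_cases i <;> fin_cases j <;> simp [h10, h01, h11]⟩

theorem exists_inv_mul_mul_eq_companion_fin_two {a : Matrix (Fin 2) (Fin 2) K}
    (ha : a ∉ Set.range (scalar (Fin 2))) :
    ∃ C : Matrix (Fin 2) (Fin 2) K, IsUnit C ∧ C⁻¹ * a * C = !![0, -a.det; 1, a.trace] := by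
  obtain ⟨v, hv⟩ := exists_det_krylov_ne_zero ha
  have hC : IsUnit (krylov a v) := (isUnit_iff_isUnit_det _).2 hv.isUnit
  refine ⟨krylov a v, hC, ?_⟩
  rw [Matrix.mul_assoc, mul_krylov_fin_two,
    nonsing_inv_mul_cancel_left _ _ ((isUnit_iff_isUnit_det _).1 hC)]

end Matrix

theorem stmt11_general {F : Type*} [Field F] (h2 : (2 : F) ≠ 0)
    (a : Matrix (Fin 2) (Fin 2) F) (ha : a.trace = 0) :
    ∃ C : Matrix (Fin 2) (Fin 2) F, IsUnit C ∧
      (C⁻¹ * a * C) 0 0 = 0 ∧ (C⁻¹ * a * C) 1 1 = 0 := by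
  by_cases hscalar : a ∈ Set.range (scalar (Fin 2))
  · obtain ⟨c, rfl⟩ := hscalar
    have hc : c = 0 := by simpa [trace_fin_two, ← two_mul, h2] using ha
    exact ⟨1, isUnit_one, by simp [hc]⟩
  · obtain ⟨C, hC, hconj⟩ := exists_inv_mul_mul_eq_companion_fin_two hscalar
    exact ⟨C, hC, by simp [hconj, ha]⟩

/-- over a field of characteristic ≠ 2 in which every element has
a square root, every traceless 2×2 matrix is group-conjugate to a matrix with
zero diagonal. -/
theorem stmt11 {F : Type*} [Field F] (h2 : (2 : F) ≠ 0)
    (hsq : ∀ x : F, ∃ y : F, y ^ 2 = x)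
    (a : Matrix (Fin 2) (Fin 2) F) (ha : a.trace = 0) :
    ∃ C : Matrix (Fin 2) (Fin 2) F, IsUnit C ∧
      (C⁻¹ * a * C) 0 0 = 0 ∧ (C⁻¹ * a * C) 1 1 = 0 :=
  stmt11_general h2 a ha
end
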